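/- For every μ ∈ (0, 1/2) there exists x* > √3 μ such that ∂Ω/∂x (x*, 0) = 0; since also ∂Ω/∂y (x*, 0) = 0, the point (x*, 0) is a collinear equilibrium point of the restricted four-body problem lying on the positive x-axis beyond the primary m₁. -/

import Mathlib

noncomputable section

/-- Position of the primary of mass `1 - 2μ`. -/
def z1 (μ : ℝ) : ℝ × ℝ := (Real.sqrt 3 * μ, 0)

/-- Position of one primary of mass `μ`. -/
def z2 (μ : ℝ) : ℝ × ℝ := (-(Real.sqrt 3 * (1 - 2*μ)) / 2, -(1/2))

/-- Position of the other primary of mass `μ`. -/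
def z3 (μ : ℝ) : ℝ × ℝ := (-(Real.sqrt 3 * (1 - 2*μ)) / 2, 1/2)

/-- Euclidean distance between two points of the plane. -/
def dist2 (p q : ℝ × ℝ) : ℝ := Real.sqrt ((p.1 - q.1)^2 + (p.2 - q.2)^2)

/-- The effective potential `Ω(x,y) = (x² + y²)/2 + Σᵢ μᵢ/rᵢ`. -/
def Omega (μ x y : ℝ) : ℝ :=
  (x^2 + y^2)/2 + (1 - 2*μ) / dist2 (x, y) (z1 μ)
    + μ / dist2 (x, y) (z2 μ) + μ / dist2 (x, y) (z3 μ)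

/-- Partial derivative `∂Ω/∂x`. -/
def Omegax (μ x y : ℝ) : ℝ := deriv (fun s => Omega μ s y) x

/-- Partial derivative `∂Ω/∂y`. -/
def Omegay (μ x y : ℝ) : ℝ := deriv (fun s => Omega μ x s) y

/-- The point `(x, y)` is away from the three primaries. -/
def AvoidsPrimaries (μ x y : ℝ) : Prop :=
  (x, y) ≠ z1 μ ∧ (x, y) ≠ z2 μ ∧ (x, y) ≠ z3 μ

lemma hasDerivAt_one_div_sqrt (q b p : ℝ) (h : (p - q)^2 + b^2 ≠ 0) :
    HasDerivAt (fun s : ℝ => 1 / Real.sqrt ((s - q)^2 + b^2))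
      (-(p - q) / (((p - q)^2 + b^2) * Real.sqrt ((p - q)^2 + b^2))) p := by
  have hpos : 0 < (p - q)^2 + b^2 := lt_of_le_of_ne (by positivity) (Ne.symm h)
  have hu : HasDerivAt (fun s : ℝ => (s - q)^2 + b^2) (2 * (p - q)) p := by
    have := (((hasDerivAt_id p).sub_const q).pow 2).add_const (b^2)
    simpa using this
  have hs : HasDerivAt (fun s : ℝ => Real.sqrt ((s - q)^2 + b^2))
      (1 / (2 * Real.sqrt ((p - q)^2 + b^2)) * (2 * (p - q))) p :=
    (Real.hasDerivAt_sqrt h).comp p hu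
  have hR : 0 < Real.sqrt ((p - q)^2 + b^2) := Real.sqrt_pos.2 hpos
  have hinv := hs.inv hR.ne'
  simp only [one_div]
  refine hinv.congr_deriv ?_
  rw [Real.sq_sqrt hpos.le]
  field_simp

lemma omegay_zero (μ x : ℝ) : Omegay μ x 0 = 0 := by
  have hsymm : (fun s => Omega μ x (-s)) = (fun s => Omega μ x s) := by
    funext s
    unfold Omega dist2 z1 z2 z3
    norm_num
    ring_nf
  have h := deriv_comp_neg (fun s => Omega μ x s) (0 : ℝ)
  rw [hsymm, neg_zero] at h
  rw [Omegay]
  linarith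

lemma omegax_formula (μ x : ℝ) (hx : Real.sqrt 3 * μ < x) :
    Omegax μ x 0 = x - (1 - 2*μ)/(x - Real.sqrt 3 * μ)^2
      - 2*μ*(x + Real.sqrt 3 * (1 - 2*μ)/2) /
        (((x + Real.sqrt 3 * (1 - 2*μ)/2)^2 + (1/2:ℝ)^2)
          * Real.sqrt ((x + Real.sqrt 3 * (1 - 2*μ)/2)^2 + (1/2:ℝ)^2)) := by
  set c : ℝ := Real.sqrt 3 * μ with hc
  set a : ℝ := Real.sqrt 3 * (1 - 2*μ)/2 with ha
  have hxc : 0 < x - c := sub_pos.2 hx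
  have hfun : (fun s => Omega μ s 0) = fun s : ℝ =>
      (s^2 + 0^2)/2 + (1 - 2*μ) * (1 / Real.sqrt ((s - c)^2 + 0^2))
        + μ * (1 / Real.sqrt ((s - (-a))^2 + (1/2:ℝ)^2))
        + μ * (1 / Real.sqrt ((s - (-a))^2 + (1/2:ℝ)^2)) := by
    funext s
    unfold Omega dist2 z1 z2 z3
    norm_num [hc, ha]
    ring_nf
  have h1ne : (x - c)^2 + (0:ℝ)^2 ≠ 0 := by positivity
  have h2ne : (x - (-a))^2 + (1/2:ℝ)^2 ≠ 0 := by positivity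
  have hA : HasDerivAt (fun s : ℝ => (s^2 + 0^2)/2) x x := by
    have := ((hasDerivAt_pow 2 x).add_const ((0:ℝ)^2)).div_const 2
    simpa using this
  have hB := (hasDerivAt_one_div_sqrt c 0 x h1ne).const_mul (1 - 2*μ)
  have hC := (hasDerivAt_one_div_sqrt (-a) (1/2) x h2ne).const_mul μ
  have hd := ((hA.add hB).add hC).add hC
  simp only [Pi.add_def] at hd
  rw [Omegax, hfun, hd.deriv]
  have hs1 : Real.sqrt ((x - c)^2 + 0^2) = x - c := by
    rw [show (x - c)^2 + (0:ℝ)^2 = (x-c)^2 by ring, Real.sqrt_sq hxc.le]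
  have hxa : x - (-a) = x + a := by ring
  rw [hs1, hxa]
  have hu : 0 < (x + a)^2 + (1/2:ℝ)^2 := by positivity
  have hR : 0 < Real.sqrt ((x + a)^2 + (1/2:ℝ)^2) := Real.sqrt_pos.2 hu
  field_simp
  ring

lemma third_bound (m v : ℝ) (hm : 0 ≤ m) (hv : 0 < v) :
    2*m*v / ((v^2 + (1/2:ℝ)^2) * Real.sqrt (v^2 + (1/2:ℝ)^2)) ≤ 4*m := by
  have hu : (0:ℝ) < v^2 + (1/2:ℝ)^2 := by positivity
  have hR : 0 < Real.sqrt (v^2 + (1/2:ℝ)^2) := Real.sqrt_pos.2 hu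
  have hRhalf : (1/2:ℝ) ≤ Real.sqrt (v^2 + (1/2:ℝ)^2) := by
    have h := Real.sqrt_le_sqrt (show (1/2:ℝ)^2 ≤ v^2 + (1/2:ℝ)^2 by nlinarith)
    rwa [Real.sqrt_sq (by norm_num : (0:ℝ) ≤ 1/2)] at h
  have hvle : v ≤ v^2 + (1/2:ℝ)^2 := by nlinarith [sq_nonneg (v - 1/2)]
  have hden : v ≤ 2 * ((v^2 + (1/2:ℝ)^2) * Real.sqrt (v^2 + (1/2:ℝ)^2)) := by
    have h1 : v^2 + (1/2:ℝ)^2 ≤ 2 * ((v^2 + (1/2:ℝ)^2) * Real.sqrt (v^2 + (1/2:ℝ)^2)) := by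
      nlinarith [mul_nonneg hu.le (by linarith : (0:ℝ) ≤ 2 * Real.sqrt (v^2 + (1/2:ℝ)^2) - 1)]
    linarith
  rw [div_le_iff₀ (mul_pos hu hR)]
  nlinarith [mul_le_mul_of_nonneg_left hden (by linarith : (0:ℝ) ≤ 2*m)]

lemma third_nonneg (m v : ℝ) (hm : 0 ≤ m) (hv : 0 ≤ v) :
    0 ≤ 2*m*v / ((v^2 + (1/2:ℝ)^2) * Real.sqrt (v^2 + (1/2:ℝ)^2)) := by
  have hu : (0:ℝ) < v^2 + (1/2:ℝ)^2 := by positivity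
  have hR : 0 ≤ Real.sqrt (v^2 + (1/2:ℝ)^2) := Real.sqrt_nonneg _
  exact div_nonneg (by nlinarith) (mul_nonneg hu.le hR)

/-- For every `μ ∈ (0, 1/2)` there is a collinear equilibrium point
`(x*, 0)` with `x* > √3 μ`, beyond the primary `m₁` on the positive x-axis. -/
theorem exists_collinear_equilibrium (μ : ℝ) (hμ : μ ∈ Set.Ioo (0 : ℝ) (1/2)) :
    ∃ xs : ℝ, Real.sqrt 3 * μ < xs ∧ Omegax μ xs 0 = 0 ∧ Omegay μ xs 0 = 0 := by
  obtain ⟨hμ0, hμ2⟩ := hμ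
  set c : ℝ := Real.sqrt 3 * μ with hc
  set a : ℝ := Real.sqrt 3 * (1 - 2*μ)/2 with ha
  have h12 : (0:ℝ) < 1 - 2*μ := by linarith
  have hsqrt3 : Real.sqrt 3 < 2 := by
    rw [show (2:ℝ) = Real.sqrt 4 by rw [show (4:ℝ) = 2^2 by norm_num, Real.sqrt_sq]; norm_num]
    exact Real.sqrt_lt_sqrt (by norm_num) (by norm_num)
  have hsq30 : 0 ≤ Real.sqrt 3 := Real.sqrt_nonneg 3
  have hc0 : 0 < c := by rw [hc]; positivity
  have hc1 : c < 1 := by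
    rw [hc]
    calc Real.sqrt 3 * μ < 2 * μ := by nlinarith
    _ ≤ 1 := by linarith
  have ha0 : 0 < a := by rw [ha]; positivity
  set t : ℝ := Real.sqrt (1 - 2*μ) / 2 with ht
  have ht0 : 0 < t := by rw [ht]; positivity
  have ht2 : t^2 = (1 - 2*μ)/4 := by
    rw [ht, div_pow, Real.sq_sqrt h12.le]; norm_num
  have hthalf : t ≤ 1/2 := by
    have h1 : Real.sqrt (1 - 2*μ) ≤ 1 := by
      have := Real.sqrt_le_sqrt (show 1 - 2*μ ≤ 1 by linarith)
      simpa using this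
    rw [ht]; linarith
  set g : ℝ → ℝ := fun s => s - (1 - 2*μ)/(s - c)^2
      - 2*μ*(s + a) / (((s + a)^2 + (1/2:ℝ)^2) * Real.sqrt ((s + a)^2 + (1/2:ℝ)^2)) with hg
  set x₁ : ℝ := c + t with hx₁
  set x₂ : ℝ := c + 3 with hx₂
  have hx12 : x₁ ≤ x₂ := by rw [hx₁, hx₂]; linarith
  -- continuity
  have hcont : ContinuousOn g (Set.Icc x₁ x₂) := by
    intro s hs
    have hsc : 0 < s - c := by
      have := hs.1; rw [hx₁] at this; linarith
    have hu : (0:ℝ) < (s + a)^2 + (1/2:ℝ)^2 := by positivity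
    have hR : 0 < Real.sqrt ((s + a)^2 + (1/2:ℝ)^2) := Real.sqrt_pos.2 hu
    apply ContinuousAt.continuousWithinAt
    apply ContinuousAt.sub
    apply ContinuousAt.sub continuousAt_id
    · exact ContinuousAt.div (by fun_prop) (by fun_prop) (pow_ne_zero 2 hsc.ne')
    · refine ContinuousAt.div (by fun_prop) (ContinuousAt.mul (by fun_prop) ?_) ?_
      · exact Real.continuous_sqrt.continuousAt.comp (by fun_prop)
      · exact ne_of_gt (mul_pos hu hR)
  -- sign at x₁
  have hgx1 : g x₁ < 0 := by
    have hx1c : x₁ - c = t := by rw [hx₁]; ring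
    have hv : 0 < x₁ + a := by rw [hx₁]; linarith
    have hthird := third_nonneg μ (x₁ + a) hμ0.le hv.le
    have hmain : (1 - 2*μ)/(x₁ - c)^2 = 4 := by
      rw [hx1c, ht2]; field_simp
    rw [hg]
    simp only
    rw [hmain]
    have : x₁ < 2 := by rw [hx₁]; linarith
    linarith
  -- sign at x₂
  have hgx2 : 0 < g x₂ := by
    have hv0 : 0 < x₂ + a := by rw [hx₂]; linarith
    have hthird := third_bound μ (x₂ + a) hμ0.le hv0
    have hsecond : (1 - 2*μ)/(x₂ - c)^2 ≤ 1/9 := by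
      have h3 : x₂ - c = 3 := by rw [hx₂]; ring
      rw [h3, div_le_iff₀ (by norm_num)]; linarith
    have h3x : (3:ℝ) ≤ x₂ := by rw [hx₂]; linarith
    rw [hg]
    simp only
    linarith [hthird, hsecond]
  -- IVT
  have hmem : (0:ℝ) ∈ Set.Icc (g x₁) (g x₂) := ⟨hgx1.le, hgx2.le⟩
  obtain ⟨xs, hxsmem, hgxs⟩ := intermediate_value_Icc hx12 hcont hmem
  have hxsc : c < xs := by
    have := hxsmem.1; rw [hx₁] at this; linarith
  refine ⟨xs, hxsc, ?_, omegay_zero μ xs⟩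
  rw [omegax_formula μ xs hxsc]
  rw [hg] at hgxs
  exact hgxs
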